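/- Let 0 < M ≤ 2c/a, κ̄ ∈ (0, M), and let σ satisfy a·(κ̄ − M/2) ≤ σ ≤ c + a·(κ̄ − M). Define H(κ) := G( a·(M − κ̄) + σ ) − G( a·(κ − κ̄) + σ ) for κ ∈ [0, M] (all arguments of G lie in [−c, c]). Then H(M) = 0 and H(κ) > 0 for every κ ∈ (0, M). -/

import Mathlib

/-!
Write `x = a (M - κ̄) + σ` and `y = a (κ - κ̄) + σ`. The constraints on `σ` give `|y| < x ≤ c`
for `κ ∈ (0, M)`, and `H κ = G x - G y`. Since `g` is odd, `G` is even, so `G y = G |y|`; since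
`g > 0` on `(0, c)`, `G` is strictly increasing on `[0, c]`, whence `G |y| < G x`.

The analytic point is that `g` is integrable up to `c` (otherwise `G c` is a junk value).
The decay of `Φ'` gives `c - Φ y ≤ (C₀ / α) y ^ (-α)`, hence `g u ≲ (c - u) ^ (-1 / α)`
near `c`, which is integrable because `α > 1`.
-/

open Set Filter Topology MeasureTheory intervalIntegral Function

theorem sub_le_div_mul_rpow_of_deriv_le {f : ℝ → ℝ} {c C α y₀ : ℝ} (hf : Differentiable ℝ f)
    (hlim : Tendsto f atTop (𝓝 c)) (hα : 0 < α) (hy₀ : 0 < y₀)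
    (hderiv : ∀ y, y₀ ≤ y → deriv f y ≤ C * y ^ (-α - 1)) {y : ℝ} (hy : y₀ ≤ y) :
    c - f y ≤ C / α * y ^ (-α) := by
  set h : ℝ → ℝ := fun z => f z + C / α * z ^ (-α)
  have hderiv_h : ∀ z, 0 < z → HasDerivAt h (deriv f z - C * z ^ (-α - 1)) z := by
    intro z hz
    refine ((hf z).hasDerivAt.add
      ((Real.hasDerivAt_rpow_const (p := -α) (Or.inl hz.ne')).const_mul (C / α))).congr_deriv ?_
    field_simp
    ring
  have hanti : AntitoneOn h (Ici y₀) := by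
    refine antitoneOn_of_deriv_nonpos (convex_Ici y₀)
      (fun z hz => (hderiv_h z (hy₀.trans_le hz)).continuousAt.continuousWithinAt) ?_ ?_ <;>
      rw [interior_Ici]
    · exact fun z hz => (hderiv_h z (hy₀.trans hz)).differentiableAt.differentiableWithinAt
    · intro z hz
      rw [(hderiv_h z (hy₀.trans hz)).deriv]
      linarith [hderiv z hz.le]
  have hlim_h : Tendsto h atTop (𝓝 c) := by
    simpa using hlim.add ((tendsto_rpow_neg_atTop hα).const_mul (C / α))
  have hc : c ≤ h y :=
    le_of_tendsto hlim_h (eventually_ge_atTop y |>.mono fun z hz => hanti hy (hy.trans hz) hz)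
  simp only [h] at hc
  linarith

theorem le_rpow_inv_mul_rpow_neg_inv {y d K α : ℝ} (hy : 0 < y) (hd : 0 < d) (hα : 0 < α)
    (h : d ≤ K * y ^ (-α)) : y ≤ K ^ α⁻¹ * d ^ (-α⁻¹) := by
  have hyα : 0 < y ^ α := Real.rpow_pos_of_pos hy α
  have hpow : y ^ α ≤ K / d := by
    rw [Real.rpow_neg hy.le, ← div_eq_mul_inv] at h
    exact (le_div_comm₀ hd hyα).1 h
  calc y = (y ^ α) ^ α⁻¹ := (Real.rpow_rpow_inv hy.le hα.ne').symm
    _ ≤ (K / d) ^ α⁻¹ := Real.rpow_le_rpow hyα.le hpow (inv_nonneg.2 hα.le)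
    _ = K ^ α⁻¹ * d ^ (-α⁻¹) := by
      have hK : 0 ≤ K := ((div_pos_iff_of_pos_right hd).1 (hyα.trans_le hpow)).le
      rw [Real.div_rpow hK hd.le, Real.rpow_neg hd.le, div_eq_mul_inv]

theorem integral_zero_neg_eq_of_odd {f : ℝ → ℝ} {v : ℝ} (hf : ∀ s ∈ uIcc 0 v, f (-s) = -f s) :
    ∫ s in 0..-v, f s = ∫ s in 0..v, f s := by
  have h : ∫ s in 0..v, f (-s) = -∫ s in 0..v, f s := by
    rw [integral_congr hf, intervalIntegral.integral_neg]
  rw [integral_comp_neg, neg_zero] at h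
  rw [integral_symm, h, neg_neg]

theorem integrableOn_Ioo_of_monotoneOn_of_le {f : ℝ → ℝ} {a c B K r : ℝ} (hr : r < 1)
    (hmono : MonotoneOn f (Ioo a c)) (hbound : ∀ u ∈ Ioo a c, ‖f u‖ ≤ B + K * (c - u) ^ (-r)) :
    IntegrableOn f (Ioo a c) := by
  have hdom : IntervalIntegrable (fun u => B + K * (c - u) ^ (-r)) volume a c := by
    have h := (intervalIntegrable_rpow' (a := c - a) (b := 0) (r := -r)
      (by linarith)).comp_sub_left c
    simp only [sub_sub_cancel, sub_zero] at h
    exact intervalIntegrable_const.add (h.const_mul K)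
  exact Integrable.mono'
    ((intervalIntegrable_iff.1 hdom).mono_set (Ioo_subset_Ioc_self.trans Ioc_subset_uIoc))
    (aemeasurable_restrict_of_monotoneOn measurableSet_Ioo hmono).aestronglyMeasurable
    (ae_restrict_of_forall_mem measurableSet_Ioo hbound)

section OddIncreasing

variable {Φ : ℝ → ℝ} {c : ℝ}

theorem StrictMono.range_eq_Ioo_of_odd (hmono : StrictMono Φ) (hcont : Continuous Φ)
    (hodd : ∀ y, Φ (-y) = -Φ y) (hlim : Tendsto Φ atTop (𝓝 c)) : range Φ = Ioo (-c) c := by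
  have hlt : ∀ y, Φ y < c := fun y =>
    (hmono (lt_add_one y)).trans_le (hmono.monotone.ge_of_tendsto hlim _)
  ext u
  constructor
  · rintro ⟨y, rfl⟩
    exact ⟨by linarith [hlt (-y), hodd y], hlt y⟩
  · rintro ⟨hcu, huc⟩
    obtain ⟨b, hb⟩ := (hlim.eventually (eventually_gt_nhds huc)).exists
    obtain ⟨b', hb'⟩ := (hlim.eventually (eventually_gt_nhds (neg_lt.1 hcu))).exists
    exact mem_range_of_exists_le_of_exists_ge hcont ⟨-b', by linarith [hodd b']⟩ ⟨b, hb.le⟩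

theorem StrictMono.monotoneOn_invFun (hmono : StrictMono Φ) : MonotoneOn (invFun Φ) (range Φ) :=
  fun _ hu _ hv huv => hmono.le_iff_le.1 (by rwa [invFun_eq hu, invFun_eq hv])

theorem invFun_neg_of_odd (hinj : Injective Φ) (hodd : ∀ y, Φ (-y) = -Φ y) {u : ℝ}
    (hu : u ∈ range Φ) : invFun Φ (-u) = -invFun Φ u := by
  have hneg : -u ∈ range Φ := ⟨-invFun Φ u, by rw [hodd, invFun_eq hu]⟩
  apply hinj
  rw [invFun_eq hneg, hodd, invFun_eq hu]

theorem invFun_le_add_mul_rpow {y₀ K α u : ℝ} (hy₀ : 0 < y₀) (hK : 0 ≤ K) (hα : 0 < α)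
    (htail : ∀ y, y₀ ≤ y → c - Φ y ≤ K * y ^ (-α)) (hu : u ∈ range Φ) (huc : u < c) :
    invFun Φ u ≤ y₀ + K ^ α⁻¹ * (c - u) ^ (-α⁻¹) := by
  have hcu : 0 < c - u := sub_pos.2 huc
  have hrest : 0 ≤ K ^ α⁻¹ * (c - u) ^ (-α⁻¹) := by positivity
  rcases lt_or_ge (invFun Φ u) y₀ with hlt | hge
  · linarith
  · have htail_u := htail _ hge
    rw [invFun_eq hu] at htail_u
    linarith [le_rpow_inv_mul_rpow_neg_inv (hy₀.trans_le hge) hcu hα htail_u]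

theorem StrictMono.invFun_pos_of_odd (hmono : StrictMono Φ) (hodd : ∀ y, Φ (-y) = -Φ y)
    {u : ℝ} (hu : u ∈ range Φ) (hu0 : 0 < u) : 0 < invFun Φ u := by
  have hΦ0 : Φ 0 = 0 := by linarith [neg_zero (G := ℝ) ▸ hodd 0]
  exact hmono.lt_iff_lt.1 (by rwa [invFun_eq hu, hΦ0])

theorem StrictMono.intervalIntegrable_invFun (hmono : StrictMono Φ) (hodd : ∀ y, Φ (-y) = -Φ y)
    (hrange : range Φ = Ioo (-c) c) (hc : 0 < c) {y₀ K α : ℝ} (hy₀ : 0 < y₀) (hK : 0 ≤ K)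
    (hα : 1 < α) (htail : ∀ y, y₀ ≤ y → c - Φ y ≤ K * y ^ (-α)) :
    IntervalIntegrable (invFun Φ) volume 0 c := by
  have hsub : Ioo 0 c ⊆ range Φ := hrange ▸ Ioo_subset_Ioo_left (by linarith)
  rw [intervalIntegrable_iff_integrableOn_Ioc_of_le hc.le, integrableOn_Ioc_iff_integrableOn_Ioo]
  refine integrableOn_Ioo_of_monotoneOn_of_le (B := y₀) (K := K ^ α⁻¹) (inv_lt_one_of_one_lt₀ hα)
    (hmono.monotoneOn_invFun.mono hsub) fun u hu => ?_
  rw [Real.norm_eq_abs, abs_of_pos (hmono.invFun_pos_of_odd hodd (hsub hu) hu.1)]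
  exact invFun_le_add_mul_rpow hy₀ hK (by linarith) htail (hsub hu) hu.2

theorem StrictMono.integral_invFun_lt (hmono : StrictMono Φ) (hodd : ∀ y, Φ (-y) = -Φ y)
    (hrange : range Φ = Ioo (-c) c) (hint : IntervalIntegrable (invFun Φ) volume 0 c)
    {p q : ℝ} (hp : 0 ≤ p) (hpq : p < q) (hq : q ≤ c) :
    ∫ s in 0..p, invFun Φ s < ∫ s in 0..q, invFun Φ s := by
  have hc : 0 < c := hp.trans_lt (hpq.trans_le hq)
  have hII : ∀ v ∈ Icc 0 c, ∀ w ∈ Icc 0 c, IntervalIntegrable (invFun Φ) volume v w :=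
    fun v hv w hw => hint.mono_set (uIcc_subset_uIcc (by rwa [uIcc_of_le hc.le])
      (by rwa [uIcc_of_le hc.le]))
  rw [← sub_pos, integral_interval_sub_left (hII 0 ⟨le_rfl, hc.le⟩ q ⟨by linarith, hq⟩)
    (hII 0 ⟨le_rfl, hc.le⟩ p ⟨hp, by linarith⟩)]
  refine intervalIntegral_pos_of_pos_on (hII p ⟨hp, by linarith⟩ q ⟨by linarith, hq⟩)
    (fun u hu => hmono.invFun_pos_of_odd hodd (hrange ▸ ⟨by linarith [hu.1], hu.2.trans_le hq⟩)
      (hp.trans_lt hu.1)) hpq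

theorem StrictMono.integral_invFun_abs (hmono : StrictMono Φ) (hodd : ∀ y, Φ (-y) = -Φ y)
    (hrange : range Φ = Ioo (-c) c) {v : ℝ} (hv : |v| < c) :
    ∫ s in 0..|v|, invFun Φ s = ∫ s in 0..v, invFun Φ s := by
  rcases abs_choice v with h | h <;> rw [h]
  refine integral_zero_neg_eq_of_odd fun s hs => invFun_neg_of_odd hmono.injective hodd
    (hrange ▸ ?_)
  have := abs_lt.1 hv
  rcases mem_uIcc.1 hs with hs | hs <;> exact ⟨by linarith, by linarith⟩

end OddIncreasing

theorem stmt_16_general (c α : ℝ) (hc : 0 < c) (hα : 2 ≤ α)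
    (Φ : ℝ → ℝ)
    (hodd : ∀ y : ℝ, Φ (-y) = -Φ y)
    (hΦ' : ∀ y : ℝ, 0 < deriv Φ y)
    (hlim : Filter.Tendsto Φ Filter.atTop (nhds c))
    (C₀ y₀ : ℝ) (hC₀ : 0 < C₀) (hy₀ : 0 < y₀)
    (hdecay : ∀ y : ℝ, y₀ ≤ y → deriv Φ y ≤ C₀ * y ^ (-α - 1))
    (a : ℝ) (ha : 0 < a) (M κb σ : ℝ)
    (hσ1 : a * (κb - M / 2) ≤ σ) (hσ2 : σ ≤ c + a * (κb - M)) :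
    let g : ℝ → ℝ := Function.invFun Φ
    let G : ℝ → ℝ := fun u => ∫ s in (0:ℝ)..u, g s
    let H : ℝ → ℝ := fun κ => G (a * (M - κb) + σ) - G (a * (κ - κb) + σ)
    H M = 0 ∧ ∀ κ ∈ Set.Ioo (0:ℝ) M, 0 < H κ := by
  intro g G H
  have hα0 : 0 < α := by linarith
  have hmono : StrictMono Φ := strictMono_of_deriv_pos hΦ'
  have hdiff : Differentiable ℝ Φ := fun y => differentiableAt_of_deriv_ne_zero (hΦ' y).ne'
  have hrange := hmono.range_eq_Ioo_of_odd hdiff.continuous hodd hlim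
  have hint : IntervalIntegrable g volume 0 c :=
    hmono.intervalIntegrable_invFun hodd hrange hc hy₀ (div_nonneg hC₀.le hα0.le) (by linarith)
      fun y hy => sub_le_div_mul_rpow_of_deriv_le hdiff hlim hα0 hy₀ hdecay hy
  refine ⟨sub_self _, fun κ ⟨hκ0, hκM⟩ => ?_⟩
  set x := a * (M - κb) + σ
  set y := a * (κ - κb) + σ
  have hxc : x ≤ c := by linarith
  have hyx : |y| < x := abs_lt.2
    ⟨by linarith [mul_pos ha hκ0], by linarith [mul_lt_mul_of_pos_left hκM ha]⟩
  show 0 < G x - G y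
  rw [sub_pos]
  calc G y = ∫ s in 0..|y|, g s := (hmono.integral_invFun_abs hodd hrange (hyx.trans_le hxc)).symm
    _ < G x := hmono.integral_invFun_lt hodd hrange hint (abs_nonneg y) hyx hxc

theorem stmt_16 (c α : ℝ) (hc : 0 < c) (hα : 2 ≤ α)
    (Φ : ℝ → ℝ) (hΦ : ContDiff ℝ 2 Φ)
    (hodd : ∀ y : ℝ, Φ (-y) = -Φ y)
    (hΦ' : ∀ y : ℝ, 0 < deriv Φ y)
    (hlim : Filter.Tendsto Φ Filter.atTop (nhds c))
    (C₀ y₀ : ℝ) (hC₀ : 0 < C₀) (hy₀ : 0 < y₀)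
    (hdecay : ∀ y : ℝ, y₀ ≤ y → deriv Φ y ≤ C₀ * y ^ (-α - 1))
    (a : ℝ) (ha : 0 < a) (M κb σ : ℝ)
    (hM : 0 < M) (hM2 : M ≤ 2 * c / a) (hκb : κb ∈ Set.Ioo (0:ℝ) M)
    (hσ1 : a * (κb - M / 2) ≤ σ) (hσ2 : σ ≤ c + a * (κb - M)) :
    let g : ℝ → ℝ := Function.invFun Φ
    let G : ℝ → ℝ := fun u => ∫ s in (0:ℝ)..u, g s
    let H : ℝ → ℝ := fun κ => G (a * (M - κb) + σ) - G (a * (κ - κb) + σ)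
    H M = 0 ∧ ∀ κ ∈ Set.Ioo (0:ℝ) M, 0 < H κ :=
  stmt_16_general c α hc hα Φ hodd hΦ' hlim C₀ y₀ hC₀ hy₀ hdecay a ha M κb σ hσ1 hσ2
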